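/- arXiv:0805.0992 — 7 statements merged into one kernel-verified Lean document; each statement's English description precedes it below -/
import Mathlib

section
/- For all natural numbers r, s, t ≥ 1, the Fibonacci numbers satisfy F_{r+s+t} = F_{r+1} F_{s+1} F_{t+1} + F_r F_s F_t - F_{r-1} F_{s-1} F_{t-1}. -/
theorem fib_add_three (r s t : ℕ) (hr : r ≥ 1) (hs : s ≥ 1) (ht : t ≥ 1) :
    (Nat.fib (r + s + t) : ℤ) =
      (Nat.fib (r + 1) : ℤ) * Nat.fib (s + 1) * Nat.fib (t + 1)
        + (Nat.fib r : ℤ) * Nat.fib s * Nat.fib t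
        - (Nat.fib (r - 1) : ℤ) * Nat.fib (s - 1) * Nat.fib (t - 1) := by
  obtain ⟨a, rfl⟩ := Nat.exists_eq_add_of_le hr
  obtain ⟨b, rfl⟩ := Nat.exists_eq_add_of_le hs
  obtain ⟨c, rfl⟩ := Nat.exists_eq_add_of_le ht
  have key : ∀ m n : ℕ, (Nat.fib (m + n + 1) : ℤ)
      = Nat.fib m * Nat.fib n + Nat.fib (m + 1) * Nat.fib (n + 1) := by
    intro m n; exact_mod_cast Nat.fib_add m n
  have step : ∀ n : ℕ, (Nat.fib (n + 2) : ℤ) = Nat.fib n + Nat.fib (n + 1) := by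
    intro n; rw [Nat.fib_add_two]; push_cast; ring
  have e1 : (Nat.fib (1 + a + (1 + b) + (1 + c)) : ℤ)
      = Nat.fib (a + 1) * Nat.fib (b + c + 1) + Nat.fib (a + 2) * Nat.fib (b + c + 2) := by
    have := key (a + 1) (b + c + 1)
    rw [show 1 + a + (1 + b) + (1 + c) = (a + 1) + (b + c + 1) + 1 by ring] at *
    simpa [show a + 1 + 1 = a + 2 from rfl, show b + c + 1 + 1 = b + c + 2 from rfl] using this
  have e2 := key b c
  have e3 : (Nat.fib (b + c + 2) : ℤ)
      = Nat.fib (b + 1) * Nat.fib c + Nat.fib (b + 2) * Nat.fib (c + 1) := by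
    have := key (b + 1) c
    simpa [show b + 1 + c + 1 = b + c + 2 by ring, show b + 1 + 1 = b + 2 from rfl] using this
  simp only [show ∀ x : ℕ, 1 + x = x + 1 from fun x => by ring, Nat.add_sub_cancel] at *
  rw [e1, e2, e3, step a, step b, step c]
  ring
end

section
/- Let ℓ be a positive integer and let a_n be defined by a_1 = 1 + ℓ, a_2 = (1+ℓ)^2 - 1, and a_n = ℓ a_{n-1} + ℓ a_{n-2} for n ≥ 3. Let b_n be defined by b_1 = ℓ, b_2 = (1+ℓ)^2 - 1, and b_n = ℓ b_{n-1} + ℓ b_{n-2} for n ≥ 3. Then for all n ≥ 4, b_n = ℓ a_{n-1} + ℓ^2 a_{n-3}. -/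
theorem b_eq_la (ℓ : ℤ) (hℓ : 0 < ℓ) (a b : ℕ → ℤ)
    (ha1 : a 1 = 1 + ℓ) (ha2 : a 2 = (1 + ℓ) ^ 2 - 1)
    (ha : ∀ n ≥ 3, a n = ℓ * a (n - 1) + ℓ * a (n - 2))
    (hb1 : b 1 = ℓ) (hb2 : b 2 = (1 + ℓ) ^ 2 - 1)
    (hb : ∀ n ≥ 3, b n = ℓ * b (n - 1) + ℓ * b (n - 2)) :
    ∀ n ≥ 4, b n = ℓ * a (n - 1) + ℓ ^ 2 * a (n - 3) := by
  have ha3 := ha 3 (by norm_num)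
  have hb3 := hb 3 (by norm_num)
  have hb4 := hb 4 (by norm_num)
  have hb5 := hb 5 (by norm_num)
  have ha4 := ha 4 (by norm_num)
  norm_num at ha3 hb3 hb4 hb5 ha4
  have key : ∀ m : ℕ, b (m + 4) = ℓ * a (m + 3) + ℓ ^ 2 * a (m + 1) ∧
      b (m + 5) = ℓ * a (m + 4) + ℓ ^ 2 * a (m + 2) := by
    intro m
    induction m with
    | zero =>
      constructor
      · rw [hb4, hb3, ha3, hb2, hb1, ha2, ha1]; ring
      · rw [hb5, hb4, hb3, ha4, ha3, hb2, hb1, ha2, ha1]; ring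
    | succ k ih =>
      refine ⟨by simpa [Nat.add_assoc] using ih.2, ?_⟩
      have h1 := hb (k + 6) (by omega)
      have h2 := ha (k + 5) (by omega)
      have h3 := ha (k + 3) (by omega)
      have e1 : k + 6 - 1 = k + 5 := by omega
      have e2 : k + 6 - 2 = k + 4 := by omega
      have e3 : k + 5 - 1 = k + 4 := by omega
      have e4 : k + 5 - 2 = k + 3 := by omega
      have e5 : k + 3 - 1 = k + 2 := by omega
      have e6 : k + 3 - 2 = k + 1 := by omega
      rw [e1, e2] at h1
      rw [e3, e4] at h2
      rw [e5, e6] at h3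
      have : k + 1 + 5 = k + 6 := by omega
      rw [this, h1, ih.1, ih.2]
      have : k + 1 + 4 = k + 5 := by omega
      rw [this, h2, h3]
      ring
  intro n hn
  obtain ⟨m, rfl⟩ : ∃ m, n = m + 4 := ⟨n - 4, by omega⟩
  have e1 : m + 4 - 1 = m + 3 := by omega
  have e2 : m + 4 - 3 = m + 1 := by omega
  rw [e1, e2]
  exact (key m).1
end

section
/- Let ℓ be a positive integer and let a_n be defined by a_1 = 1 + ℓ, a_2 = (1+ℓ)^2 - 1, and a_n = ℓ a_{n-1} + ℓ a_{n-2} for n ≥ 3. Then for all r ≥ 1 and s ≥ 3, a_{r+s} = ℓ a_r a_{s-1} + ℓ^2 a_{r-1} a_{s-2}, where a_0 = 1. -/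
theorem a_add_eq (ℓ : ℤ) (hℓ : 0 < ℓ) (a : ℕ → ℤ)
    (ha0 : a 0 = 1) (ha1 : a 1 = 1 + ℓ) (ha2 : a 2 = (1 + ℓ) ^ 2 - 1)
    (ha : ∀ n ≥ 3, a n = ℓ * a (n - 1) + ℓ * a (n - 2)) :
    ∀ r ≥ 1, ∀ s ≥ 3,
      a (r + s) = ℓ * a r * a (s - 1) + ℓ ^ 2 * a (r - 1) * a (s - 2) := by
  have rec2 : ∀ n ≥ 2, a n = ℓ * a (n - 1) + ℓ * a (n - 2) := by
    intro n hn
    rcases eq_or_lt_of_le hn with h | h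
    · rw [← h]
      norm_num [ha2, ha1, ha0]
      ring
    · exact ha n h
  intro r hr s hs
  obtain ⟨t, rfl⟩ := Nat.exists_eq_add_of_le hs
  clear hs
  revert hr
  induction r using Nat.strong_induction_on with
  | _ r IH =>
    intro hr
    match r, hr with
    | 1, _ =>
      have h1 := rec2 (1 + (3 + t)) (by omega)
      have h2 := rec2 (3 + t) (by omega)
      have e1 : 1 + (3 + t) - 1 = 3 + t := by omega
      have e2 : 1 + (3 + t) - 2 = 2 + t := by omega
      have e3 : 3 + t - 1 = 2 + t := by omega
      have e4 : 3 + t - 2 = 1 + t := by omega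
      rw [e1, e2] at h1
      rw [e3, e4] at h2
      rw [h1, h2, e3, e4, ha1]
      norm_num [ha0]
      ring
    | 2, _ =>
      have h1 := rec2 (2 + (3 + t)) (by omega)
      have e1 : 2 + (3 + t) - 1 = 1 + (3 + t) := by omega
      have e2 : 2 + (3 + t) - 2 = 3 + t := by omega
      rw [e1, e2] at h1
      have h2 := IH 1 (by omega) (by omega)
      have h3 := rec2 (3 + t) (by omega)
      have e3 : 3 + t - 1 = 2 + t := by omega
      have e4 : 3 + t - 2 = 1 + t := by omega
      rw [e3, e4] at h3
      norm_num [e3, e4] at h2 ⊢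
      rw [h1, h2, h3, ha2, ha1, ha0]
      ring
    | (k + 3), _ =>
      have h1 := rec2 (k + 3 + (3 + t)) (by omega)
      have e1 : k + 3 + (3 + t) - 1 = k + 2 + (3 + t) := by omega
      have e2 : k + 3 + (3 + t) - 2 = k + 1 + (3 + t) := by omega
      rw [e1, e2] at h1
      have h2 := IH (k + 2) (by omega) (by omega)
      have h3 := IH (k + 1) (by omega) (by omega)
      have e3 : 3 + t - 1 = 2 + t := by omega
      have e4 : 3 + t - 2 = 1 + t := by omega
      have e5 : k + 2 - 1 = k + 1 := by omega
      have e6 : k + 1 - 1 = k := by omega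
      rw [e3, e4, e5] at h2
      rw [e3, e4, e6] at h3
      have h4 := rec2 (k + 3) (by omega)
      have h5 := rec2 (k + 2) (by omega)
      have e7 : k + 3 - 1 = k + 2 := by omega
      have e8 : k + 3 - 2 = k + 1 := by omega
      have e9 : k + 2 - 2 = k := by omega
      rw [e7, e8] at h4
      rw [e5, e9] at h5
      rw [e3, e4, e7, h1, h2, h3, h4, h5]
      ring
end

section
/- Let ℓ be a positive integer and let a_n be defined by a_0 = 1, a_1 = 1 + ℓ, and a_n = ℓ a_{n-1} + ℓ a_{n-2} for n ≥ 2. Then for all r, s ≥ 2, a_{r+s} = a_r a_s - ℓ^2 a_{r-2} a_{s-2}. -/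
theorem a_add_eq_sub (ℓ : ℤ) (hℓ : 0 < ℓ) (a : ℕ → ℤ)
    (ha0 : a 0 = 1) (ha1 : a 1 = 1 + ℓ)
    (ha : ∀ n ≥ 2, a n = ℓ * a (n - 1) + ℓ * a (n - 2)) :
    ∀ r ≥ 2, ∀ s ≥ 2,
      a (r + s) = a r * a s - ℓ ^ 2 * a (r - 2) * a (s - 2) := by
  intro r hr
  -- key facts about a at small indices
  have ha2 : a 2 = ℓ * (1 + ℓ) + ℓ := by
    have := ha 2 (by omega); simpa [ha0, ha1] using this
  have ha3 : a 3 = ℓ * a 2 + ℓ * a 1 := by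
    have := ha 3 (by omega); simpa using this
  -- recurrence at r, shifted up
  have har : a r = ℓ * a (r - 1) + ℓ * a (r - 2) := ha r hr
  have har1 : a (r + 1) = ℓ * a r + ℓ * a (r - 1) := by
    have h := ha (r + 1) (by omega)
    rw [show r + 1 - 1 = r from by omega, show r + 1 - 2 = r - 1 from by omega] at h
    exact h
  have har2 : a (r + 2) = ℓ * a (r + 1) + ℓ * a r := by
    have h := ha (r + 2) (by omega)
    rw [show r + 2 - 1 = r + 1 from by omega, show r + 2 - 2 = r from by omega] at h
    exact h
  intro s hs
  induction s using Nat.strong_induction_on with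
  | _ s ih =>
    obtain ⟨t, rfl⟩ : ∃ t, s = t + 2 := ⟨s - 2, by omega⟩
    match t, ih with
    | 0, ih =>
      -- s = 2
      show a (r + 2) = a r * a 2 - ℓ ^ 2 * a (r - 2) * a 0
      linear_combination har2 + ℓ * har1 - ℓ * har - a r * ha2 +
        ℓ ^ 2 * a (r - 2) * ha0
    | 1, ih =>
      -- s = 3
      have h := ha (r + 3) (by omega)
      rw [show r + 3 - 1 = r + 2 from by omega, show r + 3 - 2 = r + 1 from by omega] at h
      show a (r + 3) = a r * a 3 - ℓ ^ 2 * a (r - 2) * a 1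
      linear_combination h + ℓ * har2 + ℓ ^ 2 * har1 + (-ℓ ^ 2 - ℓ) * har + ℓ * har1 -
        a r * ha3 - ℓ * a r * ha2 - ℓ * a r * ha1 + ℓ ^ 2 * a (r - 2) * ha1
    | (u + 2), ih =>
      set t := u + 2 with ht
      have h1 : a (r + (t + 2)) = ℓ * a (r + (t + 1)) + ℓ * a (r + t) := by
        have h := ha (r + (t + 2)) (by omega)
        rw [show r + (t + 2) - 1 = r + (t + 1) from by omega,
          show r + (t + 2) - 2 = r + t from by omega] at h
        exact h
      have h2 : a (t + 2) = ℓ * a (t + 1) + ℓ * a t := by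
        have h := ha (t + 2) (by omega)
        rw [show t + 2 - 1 = t + 1 from by omega, show t + 2 - 2 = t from by omega] at h
        exact h
      have h3 : a t = ℓ * a (t - 1) + ℓ * a (t - 2) := ha t (by omega)
      have i1 := ih (t + 1) (by omega) (by omega)
      have i2 := ih t (by omega) (by omega)
      rw [show t + 1 - 2 = t - 1 from by omega] at i1
      show a (r + (t + 2)) = a r * a (t + 2) - ℓ ^ 2 * a (r - 2) * a (t + 2 - 2)
      rw [show t + 2 - 2 = t from by omega]
      linear_combination h1 + ℓ * i1 + ℓ * i2 - a r * h2 + ℓ ^ 2 * a (r - 2) * h3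
end

section
/- Let ℓ be a positive integer and let a_n be defined by a_0 = 1, a_1 = 1 + ℓ, and a_n = ℓ a_{n-1} + ℓ a_{n-2} for n ≥ 2. Then for all r, s, t ≥ 2, a_{r+s+t+1} = ℓ a_r a_s a_t + ℓ^3 a_{r-1} a_{s-1} a_{t-1} - ℓ^4 a_{r-2} a_{s-2} a_{t-2}. -/
/-!
The sequence satisfies the two-term addition formula
`a (m + n + 3) = ℓ a (m + 1) a (n + 1) + ℓ² a m a n`, proved by two-step induction on `m`
since both sides obey the defining recurrence in `m`. Applying it twice splits
`a (r + s + t + 1)` into products of three terms, and the recurrence turns the result into the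
stated three-term formula.
-/

namespace PathColoringSeq

theorem apply_add_add_three {R : Type*} [CommSemiring R] {ℓ : R} {a : ℕ → R}
    (ha0 : a 0 = 1) (ha1 : a 1 = 1 + ℓ) (hrec : ∀ n, a (n + 2) = ℓ * a (n + 1) + ℓ * a n)
    (m n : ℕ) : a (m + n + 3) = ℓ * a (m + 1) * a (n + 1) + ℓ ^ 2 * a m * a n := by
  induction m using Nat.twoStepInduction generalizing n with
  | zero =>
    rw [zero_add, hrec (n + 1), hrec n, ha1, ha0]
    ring
  | one =>
    rw [show 1 + n + 3 = n + 2 + 2 by ring, hrec, hrec (n + 1), hrec n, hrec 0, ha1, ha0]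
    ring
  | more m ih₀ ih₁ =>
    rw [show m + 2 + n + 3 = m + n + 3 + 2 by ring, hrec,
      show m + n + 3 + 1 = m + 1 + n + 3 by ring, ih₀, ih₁,
      show m + 2 + 1 = m + 1 + 2 by ring, hrec (m + 1), hrec m]
    ring

theorem apply_add_add_add_seven {R : Type*} [CommRing R] {ℓ : R} {a : ℕ → R}
    (ha0 : a 0 = 1) (ha1 : a 1 = 1 + ℓ) (hrec : ∀ n, a (n + 2) = ℓ * a (n + 1) + ℓ * a n)
    (r s t : ℕ) :
    a (r + s + t + 7) = ℓ * a (r + 2) * a (s + 2) * a (t + 2)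
      + ℓ ^ 3 * a (r + 1) * a (s + 1) * a (t + 1) - ℓ ^ 4 * a r * a s * a t := by
  have hadd := apply_add_add_three ha0 ha1 hrec
  rw [show r + s + t + 7 = (r + 1) + (s + t + 3) + 3 by ring, hadd,
    show s + t + 3 + 1 = (s + 1) + t + 3 by ring, hadd, hadd, hrec r, hrec s, hrec t]
  ring

end PathColoringSeq

theorem a_add_three_general (ℓ : ℤ) (a : ℕ → ℤ)
    (ha0 : a 0 = 1) (ha1 : a 1 = 1 + ℓ)
    (ha : ∀ n ≥ 2, a n = ℓ * a (n - 1) + ℓ * a (n - 2)) :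
    ∀ r ≥ 2, ∀ s ≥ 2, ∀ t ≥ 2,
      a (r + s + t + 1) = ℓ * a r * a s * a t
        + ℓ ^ 3 * a (r - 1) * a (s - 1) * a (t - 1)
        - ℓ ^ 4 * a (r - 2) * a (s - 2) * a (t - 2) := by
  have hrec (n : ℕ) : a (n + 2) = ℓ * a (n + 1) + ℓ * a n := by
    simpa using ha (n + 2) (by omega)
  intro r hr s hs t ht
  obtain ⟨r, rfl⟩ := Nat.exists_eq_add_of_le' hr
  obtain ⟨s, rfl⟩ := Nat.exists_eq_add_of_le' hs
  obtain ⟨t, rfl⟩ := Nat.exists_eq_add_of_le' ht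
  rw [show r + 2 + (s + 2) + (t + 2) + 1 = r + s + t + 7 by ring]
  simpa using PathColoringSeq.apply_add_add_add_seven ha0 ha1 hrec r s t

theorem a_add_three (ℓ : ℤ) (hℓ : 0 < ℓ) (a : ℕ → ℤ)
    (ha0 : a 0 = 1) (ha1 : a 1 = 1 + ℓ)
    (ha : ∀ n ≥ 2, a n = ℓ * a (n - 1) + ℓ * a (n - 2)) :
    ∀ r ≥ 2, ∀ s ≥ 2, ∀ t ≥ 2,
      a (r + s + t + 1) = ℓ * a r * a s * a t
        + ℓ ^ 3 * a (r - 1) * a (s - 1) * a (t - 1)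
        - ℓ ^ 4 * a (r - 2) * a (s - 2) * a (t - 2) :=
  a_add_three_general ℓ a ha0 ha1 ha
end

section
/- Let k, ℓ be integers and define a_n by a_1 = k + ℓ, a_2 = (k+ℓ)^2 - k, a_n = (k+ℓ-1) a_{n-1} + ℓ a_{n-2} for n ≥ 3, and b_n by b_1 = ℓ, b_2 = (k+ℓ)^2 - k, b_3 = a_3 - b_2 + ℓ a_1, b_n = a_n - b_{n-1} + ℓ a_{n-2} for n ≥ 4. Then b_n satisfies the third-order recurrence b_n = (k+ℓ-2) b_{n-1} + (k+2ℓ-1) b_{n-2} + ℓ b_{n-3} for all n ≥ 4. -/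
theorem b_third_order (k ℓ : ℤ) (a b : ℕ → ℤ)
    (ha1 : a 1 = k + ℓ) (ha2 : a 2 = (k + ℓ) ^ 2 - k)
    (ha : ∀ n ≥ 3, a n = (k + ℓ - 1) * a (n - 1) + ℓ * a (n - 2))
    (hb1 : b 1 = ℓ) (hb2 : b 2 = (k + ℓ) ^ 2 - k)
    (hb3 : b 3 = a 3 - b 2 + ℓ * a 1)
    (hb : ∀ n ≥ 4, b n = a n - b (n - 1) + ℓ * a (n - 2)) :
    ∀ n ≥ 4, b n = (k + ℓ - 2) * b (n - 1) + (k + 2 * ℓ - 1) * b (n - 2) + ℓ * b (n - 3) := by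
  -- unified deletion-contraction relation valid from n = 3
  have hb' : ∀ n ≥ 3, b n = a n - b (n - 1) + ℓ * a (n - 2) := by
    intro n hn
    rcases eq_or_lt_of_le hn with h | h
    · have h3 : n = 3 := h.symm
      subst h3
      simpa using hb3
    · exact hb n h
  intro n hn
  rcases eq_or_lt_of_le hn with h | h
  · -- base case n = 4
    have h4 : n = 4 := h.symm
    subst h4
    have e3 : a 3 = (k + ℓ - 1) * a 2 + ℓ * a 1 := by
      have := ha 3 (by norm_num); simpa using this
    have e4 : a 4 = (k + ℓ - 1) * a 3 + ℓ * a 2 := by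
      have := ha 4 (by norm_num); simpa using this
    have eb4 : b 4 = a 4 - b 3 + ℓ * a 2 := by
      have := hb 4 (by norm_num); simpa using this
    show b 4 = (k + ℓ - 2) * b 3 + (k + 2 * ℓ - 1) * b 2 + ℓ * b 1
    rw [eb4, e4, hb3, e3, ha1, ha2, hb1, hb2]
    ring
  · -- inductive identity for n ≥ 5
    obtain ⟨m, rfl⟩ : ∃ m, n = m + 5 := ⟨n - 5, by omega⟩
    have i1 : m + 5 - 1 = m + 4 := by omega
    have i2 : m + 5 - 2 = m + 3 := by omega
    have i3 : m + 5 - 3 = m + 2 := by omega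
    rw [i1, i2, i3]
    have eb5 : b (m + 5) = a (m + 5) - b (m + 4) + ℓ * a (m + 3) := by
      have := hb' (m + 5) (by omega)
      rw [show m + 5 - 1 = m + 4 from by omega, show m + 5 - 2 = m + 3 from by omega] at this
      exact this
    have eb4 : b (m + 4) = a (m + 4) - b (m + 3) + ℓ * a (m + 2) := by
      have := hb' (m + 4) (by omega)
      rw [show m + 4 - 1 = m + 3 from by omega, show m + 4 - 2 = m + 2 from by omega] at this
      exact this
    have eb3 : b (m + 3) = a (m + 3) - b (m + 2) + ℓ * a (m + 1) := by
      have := hb' (m + 3) (by omega)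
      rw [show m + 3 - 1 = m + 2 from by omega, show m + 3 - 2 = m + 1 from by omega] at this
      exact this
    have ea5 : a (m + 5) = (k + ℓ - 1) * a (m + 4) + ℓ * a (m + 3) := by
      have := ha (m + 5) (by omega)
      rw [show m + 5 - 1 = m + 4 from by omega, show m + 5 - 2 = m + 3 from by omega] at this
      exact this
    have ea4 : a (m + 4) = (k + ℓ - 1) * a (m + 3) + ℓ * a (m + 2) := by
      have := ha (m + 4) (by omega)
      rw [show m + 4 - 1 = m + 3 from by omega, show m + 4 - 2 = m + 2 from by omega] at this
      exact this
    have ea3 : a (m + 3) = (k + ℓ - 1) * a (m + 2) + ℓ * a (m + 1) := by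
      have := ha (m + 3) (by omega)
      rw [show m + 3 - 1 = m + 2 from by omega, show m + 3 - 2 = m + 1 from by omega] at this
      exact this
    rw [eb5, eb4, eb3, ea5, ea4, ea3]
    ring
end

section
/- Let k, ℓ be integers with b_1 = ℓ, b_2 = (k+ℓ)^2 - k, b_3, b_4, b_5 defined by b_3 = a_3 - b_2 + ℓ a_1 and b_n = (k+ℓ-2) b_{n-1} + (k+2ℓ-1) b_{n-2} + ℓ b_{n-3}, where a_1 = k+ℓ, a_2 = (k+ℓ)^2 - k, a_n = (k+ℓ-1) a_{n-1} + ℓ a_{n-2}. Then the determinant of the 3×3 matrix B with rows (b_3, b_2, b_1), (b_4, b_3, b_2), (b_5, b_4, b_3) equals -k^2 (k-1) ℓ ((k+ℓ-1)^2 + 4ℓ). -/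
theorem det_B (k ℓ : ℤ) (a b : ℕ → ℤ)
    (ha1 : a 1 = k + ℓ) (ha2 : a 2 = (k + ℓ) ^ 2 - k)
    (ha : ∀ n ≥ 3, a n = (k + ℓ - 1) * a (n - 1) + ℓ * a (n - 2))
    (hb1 : b 1 = ℓ) (hb2 : b 2 = (k + ℓ) ^ 2 - k)
    (hb3 : b 3 = a 3 - b 2 + ℓ * a 1)
    (hb : ∀ n ≥ 4, b n = (k + ℓ - 2) * b (n - 1) + (k + 2 * ℓ - 1) * b (n - 2) + ℓ * b (n - 3)) :
    Matrix.det !![b 3, b 2, b 1; b 4, b 3, b 2; b 5, b 4, b 3] =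
      -k ^ 2 * (k - 1) * ℓ * ((k + ℓ - 1) ^ 2 + 4 * ℓ) := by
  have ha3 : a 3 = (k + ℓ - 1) * a 2 + ℓ * a 1 := ha 3 le_rfl
  have hb4 : b 4 = (k + ℓ - 2) * b 3 + (k + 2 * ℓ - 1) * b 2 + ℓ * b 1 := hb 4 le_rfl
  have hb5 : b 5 = (k + ℓ - 2) * b 4 + (k + 2 * ℓ - 1) * b 3 + ℓ * b 2 := hb 5 (by norm_num)
  simp only [Matrix.det_fin_three, Matrix.of_apply, Matrix.cons_val', Matrix.cons_val_zero,
    Matrix.cons_val_one, Matrix.cons_val, Matrix.cons_val_fin_one]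
  rw [hb5, hb4, hb3, ha3, hb2, hb1, ha2, ha1]
  ring
end
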